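/- arXiv:1508.02929 — 6 statements merged into one kernel-verified Lean document; each statement's English description precedes it below -/
import Mathlib

section
/- Let K be an arbitrary field and let n ≥ 3. If A is a proper subalgebra of the algebra K^{n,n} of n × n matrices over K (i.e., a K-linear subspace of K^{n,n} that is closed under matrix multiplication and with A ≠ K^{n,n}), then dim(A) ≤ n² − 2, where dim(A) denotes the dimension of A as a vector space over K. -/
/-!
If a subalgebra `A` of `Kⁿˣⁿ` had dimension `n² - 1`, it would be the kernel of a nonzero
functional `f`. Fixing `e` with `f e = 1`, the elements `x - f x • e` lie in `A`, and multiplying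
two of them shows that `f (x * y) = f x * α y + β x * f y` for suitable functions `α`, `β`.
On matrix units, `f (E p j * E k q) = δ j k * f (E p q)`, so with `f (E p q) ≠ 0` this expresses a
nonzero multiple of the identity `n × n` matrix as a product of an `n × 2` and a `2 × n` matrix,
forcing `n ≤ 2`.
-/

open Module Matrix LinearMap

theorem Submodule.exists_eq_ker_of_finrank_add_one_le {K V : Type*} [Field K] [AddCommGroup V]
    [Module K V] [FiniteDimensional K V] (A : Submodule K V) (hA : A ≠ ⊤)
    (h : finrank K V ≤ finrank K A + 1) : ∃ f : Dual K V, f ≠ 0 ∧ A = ker f := by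
  obtain ⟨f, hf, hAf⟩ := A.exists_le_ker_of_lt_top hA.lt_top
  refine ⟨f, hf, eq_of_le_of_finrank_le hAf ?_⟩
  have := Dual.finrank_ker_add_one_of_ne_zero hf
  omega

theorem LinearMap.exists_apply_mul_eq_of_ker_mul_mem {K R : Type*} [Field K] [Ring R]
    [Algebra K R] (f : R →ₗ[K] K) (hf : f ≠ 0)
    (hmul : ∀ x ∈ ker f, ∀ y ∈ ker f, x * y ∈ ker f) :
    ∃ α β : R → K, ∀ x y, f (x * y) = f x * α y + β x * f y := by
  obtain ⟨x₀, hx₀⟩ : ∃ x₀, f x₀ ≠ 0 := by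
    by_contra! h
    exact hf (LinearMap.ext h)
  set e := (f x₀)⁻¹ • x₀
  have he : f e = 1 := by simp [e, inv_mul_cancel₀ hx₀]
  have hproj (x : R) : x - f x • e ∈ ker f := by simp [he]
  refine ⟨fun y => f (e * y) - f y * f (e * e), fun x => f (x * e), fun x y => ?_⟩
  have key := mem_ker.mp (hmul _ (hproj x) _ (hproj y))
  simp only [sub_mul, mul_sub, smul_mul_assoc, mul_smul_comm, map_sub, map_smul,
    smul_eq_mul] at key
  linear_combination key

theorem Matrix.card_le_two_of_apply_mul_eq {K ι : Type*} [Field K] [Fintype ι] [DecidableEq ι]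
    (f : Matrix ι ι K →ₗ[K] K) (hf : f ≠ 0) (α β : Matrix ι ι K → K)
    (h : ∀ x y, f (x * y) = f x * α y + β x * f y) : Fintype.card ι ≤ 2 := by
  obtain ⟨p, q, hpq⟩ : ∃ p q, f (single p q 1) ≠ 0 := by
    by_contra! h0
    exact hf (ext_linearMap K fun i j => LinearMap.ext_ring (by simpa using h0 i j))
  let U : Matrix ι (Fin 2) K := of fun j => ![f (single p j 1), β (single p j 1)]
  let W : Matrix (Fin 2) ι K := (of fun k => ![α (single k q 1), f (single k q 1)])ᵀ
  have hUW : U * W = f (single p q 1) • (1 : Matrix ι ι K) := by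
    ext j k
    rw [mul_apply, Fin.sum_univ_two, smul_apply, one_apply]
    simp only [U, W, of_apply, transpose_apply, cons_val_zero, cons_val_one]
    rw [← h]
    rcases eq_or_ne j k with rfl | hjk <;> simp [*]
  calc Fintype.card ι = (U * W).rank :=
        (rank_of_isUnit _ <| by
          rw [hUW, ← Algebra.algebraMap_eq_smul_one]; exact (isUnit_iff_ne_zero.mpr hpq).map _).symm
    _ ≤ U.rank := rank_mul_le_left U W
    _ ≤ 2 := U.rank_le_card_width.trans_eq (Fintype.card_fin 2)

theorem stmt_0 (K : Type*) [Field K] (n : ℕ) (hn : 3 ≤ n)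
    (A : Submodule K (Matrix (Fin n) (Fin n) K))
    (hmul : ∀ x ∈ A, ∀ y ∈ A, x * y ∈ A)
    (hproper : A ≠ ⊤) :
    Module.finrank K A ≤ n ^ 2 - 2 := by
  have hdim : finrank K (Matrix (Fin n) (Fin n) K) = n ^ 2 := by
    rw [finrank_matrix]; simp [sq]
  by_contra! hA
  obtain ⟨f, hf, rfl⟩ := A.exists_eq_ker_of_finrank_add_one_le hproper (by omega)
  obtain ⟨α, β, hαβ⟩ := f.exists_apply_mul_eq_of_ker_mul_mem hf hmul
  have := card_le_two_of_apply_mul_eq f hf α β hαβ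
  rw [Fintype.card_fin] at this
  omega
end

section
/- Let K be an arbitrary field and let n ≥ 3. If A is a K-linear subspace of the matrix algebra K^{n,n} that is closed under matrix multiplication and dim(A) ≥ n² − 1, then A = K^{n,n}. -/
/-!
A proper subalgebra of codimension one is the kernel `ker f` of a nonzero functional. Fixing `e`
with `f e = 1` and writing `x = (x - f x • e) + f x • e`, closedness of `ker f` under products
gives `f (x * y) = f x * β y + γ x * f y` with `γ x = f (x * e)`. On `n × n` matrices with
`n ≥ 3`, the matrix units of a row are dependent modulo `ker f ⊓ ker γ`, of codimension at most
two. This yields a nonzero row matrix `X` with `f (X * y) = 0` for all `y`; as `X * y` runs over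
all matrices supported in that row, `f` vanishes on every matrix unit, a contradiction.
-/

open Matrix Module

theorem Submodule.exists_dual_ne_zero_eq_ker {K V : Type*} [Field K] [AddCommGroup V]
    [Module K V] [FiniteDimensional K V] {p : Submodule K V} (hp : p ≠ ⊤)
    (hrank : finrank K V ≤ finrank K p + 1) :
    ∃ f : Dual K V, f ≠ 0 ∧ p = LinearMap.ker f := by
  obtain ⟨f, hf, hpf⟩ := p.exists_dual_map_eq_bot_of_lt_top (lt_top_iff_ne_top.2 hp) inferInstance
  refine ⟨f, hf, Submodule.eq_of_le_of_finrank_le (LinearMap.le_ker_iff_map.2 hpf) ?_⟩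
  have := f.finrank_ker_add_one_of_ne_zero hf
  omega

theorem Module.Dual.apply_mul_eq_of_mul_mem_ker {K R : Type*} [Field K] [Ring R] [Algebra K R]
    {f : Dual K R} (hmul : ∀ x ∈ LinearMap.ker f, ∀ y ∈ LinearMap.ker f, x * y ∈ LinearMap.ker f)
    {e : R} (he : f e = 1) (x y : R) :
    f (x * y) = f x * (f (e * y) - f (e * e) * f y) + f (x * e) * f y := by
  have hker (z : R) : z - f z • e ∈ LinearMap.ker f := by simp [he]
  have h0 := hmul _ (hker x) _ (hker y)
  simp only [LinearMap.mem_ker, sub_mul, mul_sub, smul_mul_assoc, mul_smul_comm, map_sub,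
    map_smul, smul_eq_mul] at h0
  linear_combination h0

section MatrixDual

variable {K n : Type*} [Field K] [Fintype n] [DecidableEq n]

theorem Matrix.dual_apply_single_eq_zero_of_apply_mul_eq (hn : 2 < Fintype.card n)
    {f γ : Dual K (Matrix n n K)} {β : Matrix n n K → K}
    (h : ∀ x y, f (x * y) = f x * β y + γ x * f y) (j p : n) :
    f (single j p 1) = 0 := by
  obtain ⟨g, hsum, k₀, hk₀⟩ := Fintype.not_linearIndependent_iff.1 fun
      (hli : LinearIndependent K fun k => (f (single j k 1), γ (single j k 1))) => by
    simpa using hn.trans_le hli.fintype_card_le_finrank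
  set X := ∑ k, g k • single j k (1 : K)
  have hfX : f X = 0 := by
    simpa only [X, map_sum, map_smul, Prod.fst_sum, Prod.smul_fst, Prod.fst_zero]
      using congrArg Prod.fst hsum
  have hγX : γ X = 0 := by
    simpa only [X, map_sum, map_smul, Prod.snd_sum, Prod.smul_snd, Prod.snd_zero]
      using congrArg Prod.snd hsum
  have hX : X * single k₀ p 1 = g k₀ • single j p 1 := by
    rw [Finset.sum_mul, Finset.sum_eq_single k₀ (fun k _ hk => by simp [hk]) (by simp),
      smul_mul_assoc, single_mul_single_same, one_mul]
  have hgf : g k₀ * f (single j p 1) = 0 := by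
    simpa only [hX, hfX, hγX, map_smul, smul_eq_mul, zero_mul, add_zero]
      using h X (single k₀ p 1)
  exact (mul_eq_zero.1 hgf).resolve_left hk₀

theorem Matrix.dual_eq_zero_of_apply_mul_eq (hn : 2 < Fintype.card n)
    {f γ : Dual K (Matrix n n K)} {β : Matrix n n K → K}
    (h : ∀ x y, f (x * y) = f x * β y + γ x * f y) : f = 0 :=
  ext_linearMap K fun i j =>
    LinearMap.ext_ring (dual_apply_single_eq_zero_of_apply_mul_eq hn h i j)

end MatrixDual

theorem stmt_2 (K : Type*) [Field K] (n : ℕ) (hn : 3 ≤ n)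
    (A : Submodule K (Matrix (Fin n) (Fin n) K))
    (hmul : ∀ x ∈ A, ∀ y ∈ A, x * y ∈ A)
    (hdim : n ^ 2 - 1 ≤ Module.finrank K A) :
    A = ⊤ := by
  by_contra hA
  obtain ⟨f, hf, rfl⟩ := A.exists_dual_ne_zero_eq_ker hA <| by
    rw [finrank_matrix, finrank_self, Fintype.card_fin, mul_one, ← sq]
    omega
  obtain ⟨e, he⟩ := LinearMap.surjective hf 1
  have hcard : 2 < Fintype.card (Fin n) := by simp only [Fintype.card_fin]; omega
  exact hf <| dual_eq_zero_of_apply_mul_eq hcard (γ := f ∘ₗ LinearMap.mulRight K e)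
    (f.apply_mul_eq_of_mul_mem_ker hmul he)
end

section
/- Let K be an arbitrary field, let n ≥ 3, and let f : K^{n,n} → K be a K-linear functional such that the kernel of f is closed under matrix multiplication (i.e., f(A) = 0 and f(B) = 0 imply f(A·B) = 0). Then f = 0. -/
/-!
For distinct indices `i, j, k`, the matrix unit `E i j` is the product `E i k * E k j`, and
`E i k`, `E k j`, `E i j` multiply pairwise to zero in every other order. If `f (E i j) ≠ 0`,
correcting the two factors by multiples of `E i j` puts them in the kernel of `f` without changing
their product, so `f (E i j) = 0` after all. With a third index available, every off-diagonal unit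
is therefore in the kernel, hence so is every diagonal unit `E i i = E i j * E j i`, and `f`
vanishes on a basis.
-/

theorem LinearMap.eq_zero_of_ker_mul_closed_of_mul_eq {K R : Type*} [Field K] [Ring R]
    [Algebra K R] (f : R →ₗ[K] K) (hker : ∀ a b : R, f a = 0 → f b = 0 → f (a * b) = 0)
    {a b c : R} (habc : a * b = c) (ha : a * c = 0) (hb : c * b = 0)
    (hc : c * c = 0) : f c = 0 := by
  by_contra hfc
  have hprod : (a - (f a / f c) • c) * (b - (f b / f c) • c) = c := by
    simp only [sub_mul, mul_sub, smul_mul_assoc, mul_smul_comm, habc, ha, hb, hc, smul_zero,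
      sub_zero]
  have hker_shift : ∀ x : R, f (x - (f x / f c) • c) = 0 := fun x => by
    rw [map_sub, map_smul, smul_eq_mul, div_mul_cancel₀ _ hfc, sub_self]
  exact hfc (hprod ▸ hker _ _ (hker_shift a) (hker_shift b))

namespace Matrix

variable {K ι : Type*} [Field K] [Fintype ι] [DecidableEq ι]

theorem eq_zero_of_ker_mul_closed (h : 3 ≤ Fintype.card ι) (f : Matrix ι ι K →ₗ[K] K)
    (hker : ∀ A B : Matrix ι ι K, f A = 0 → f B = 0 → f (A * B) = 0) : f = 0 := by
  have h3 : 3 ≤ ENat.card ι := by rw [ENat.card_eq_coe_fintype_card]; exact_mod_cast h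
  have hoff : ∀ i j, i ≠ j → f (single i j 1) = 0 := by
    intro i j hij
    obtain ⟨k, hki, hkj⟩ := ENat.exists_ne_ne_of_three_le h3 i j
    exact f.eq_zero_of_ker_mul_closed_of_mul_eq hker (a := single i k 1) (b := single k j 1)
      (by simp) (single_mul_single_of_ne _ _ _ _ hki _)
      (single_mul_single_of_ne _ _ _ _ hkj.symm _) (single_mul_single_of_ne _ _ _ _ hij.symm _)
  have hunit : ∀ i j, f (single i j 1) = 0 := by
    intro i j
    obtain rfl | hij := eq_or_ne i j
    · obtain ⟨k, hki, -⟩ := ENat.exists_ne_ne_of_three_le h3 i i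
      have hfac : single i k (1 : K) * single k i 1 = single i i 1 := by simp
      rw [← hfac]
      exact hker _ _ (hoff i k hki.symm) (hoff k i hki)
    · exact hoff i j hij
  refine ext_linearMap K fun i j => LinearMap.ext fun c => ?_
  have hsingle : single i j c = c • single i j 1 := by rw [smul_single, smul_eq_mul, mul_one]
  change f (single i j c) = 0
  rw [hsingle, map_smul, hunit, smul_zero]

end Matrix

theorem stmt_3 (K : Type*) [Field K] (n : ℕ) (hn : 3 ≤ n)
    (f : Matrix (Fin n) (Fin n) K →ₗ[K] K)
    (hker : ∀ A B : Matrix (Fin n) (Fin n) K, f A = 0 → f B = 0 → f (A * B) = 0) :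
    f = 0 :=
  Matrix.eq_zero_of_ker_mul_closed (by simpa using hn) f hker
end

section
/- Let K be an arbitrary field, let n ≥ 3, and let f : K^{n,n} → K be a K-linear functional such that the kernel of f is closed under matrix multiplication. Then f(E_{ij}) = 0 for all indices i ≠ j, where E_{ij} denotes the matrix unit with entry 1 in position (i,j) and 0 elsewhere. -/
/-!
Pick `k ∉ {i, j}` and put `u = E_{ik}`, `v = E_{kj}`, so that `u v = E_{ij}` while
`u² = v² = v u = 0`. The element `f v • u - f u • v` lies in the kernel and squares to
`-(f u f v) • E_{ij}`, so `f u f v f(E_{ij}) = 0`. If, say, `f u = 0`, then `u` and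
`v - (f v / f E_{ij}) • E_{ij}` both lie in the kernel, and their product is `E_{ij}`.
-/

section KernelMulClosed

variable {K R : Type*} [Field K] [NonUnitalRing R] [Module K R] {f : R →ₗ[K] K}
  (hker : ∀ a b : R, f a = 0 → f b = 0 → f (a * b) = 0)
include hker

theorem map_mul_map_mul_eq_zero_of_sq_eq_zero [IsScalarTower K R R] [SMulCommClass K R R]
    {u v : R} (hu : u * u = 0) (hv : v * v = 0) (hvu : v * u = 0) :
    f u * f v * f (u * v) = 0 := by
  have hsq : (f v • u - f u • v) * (f v • u - f u • v) = -((f u * f v) • (u * v)) := by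
    simp only [sub_mul, mul_sub, smul_mul_smul_comm, hu, hv, hvu, smul_zero, sub_zero, zero_sub,
      mul_comm (f v)]
  have hmem : f (f v • u - f u • v) = 0 := by simp [mul_comm]
  simpa [hsq, mul_assoc] using hker _ _ hmem hmem

theorem map_mul_eq_zero_of_map_eq_zero_left [SMulCommClass K R R] {u v : R} (hfu : f u = 0)
    (hu : u * u = 0) : f (u * v) = 0 := by
  by_contra hw
  have hmem : f (v - (f v / f (u * v)) • (u * v)) = 0 := by simp [hw]
  have hprod : u * (v - (f v / f (u * v)) • (u * v)) = u * v := by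
    rw [mul_sub, mul_smul_comm, ← mul_assoc, hu, zero_mul, smul_zero, sub_zero]
  exact hw (hprod ▸ hker _ _ hfu hmem)

theorem map_mul_eq_zero_of_map_eq_zero_right [IsScalarTower K R R] {u v : R} (hfv : f v = 0)
    (hv : v * v = 0) : f (u * v) = 0 := by
  by_contra hw
  have hmem : f (u - (f u / f (u * v)) • (u * v)) = 0 := by simp [hw]
  have hprod : (u - (f u / f (u * v)) • (u * v)) * v = u * v := by
    rw [sub_mul, smul_mul_assoc, mul_assoc, hv, mul_zero, smul_zero, sub_zero]
  exact hw (hprod ▸ hker _ _ hmem hfv)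

theorem map_mul_eq_zero_of_sq_eq_zero [IsScalarTower K R R] [SMulCommClass K R R] {u v : R}
    (hu : u * u = 0) (hv : v * v = 0) (hvu : v * u = 0) : f (u * v) = 0 := by
  rcases mul_eq_zero.mp (map_mul_map_mul_eq_zero_of_sq_eq_zero hker hu hv hvu) with h | h
  · rcases mul_eq_zero.mp h with hfu | hfv
    · exact map_mul_eq_zero_of_map_eq_zero_left hker hfu hu
    · exact map_mul_eq_zero_of_map_eq_zero_right hker hfv hv
  · exact h

end KernelMulClosed

theorem stmt_4 (K : Type*) [Field K] (n : ℕ) (hn : 3 ≤ n)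
    (f : Matrix (Fin n) (Fin n) K →ₗ[K] K)
    (hker : ∀ A B : Matrix (Fin n) (Fin n) K, f A = 0 → f B = 0 → f (A * B) = 0) :
    ∀ i j : Fin n, i ≠ j → f (Matrix.single i j (1 : K)) = 0 := by
  intro i j hij
  obtain ⟨k, hki, hkj⟩ := Fin.exists_ne_and_ne_of_two_lt i j (by omega)
  have hprod : Matrix.single i k (1 : K) * Matrix.single k j 1 = Matrix.single i j 1 := by
    rw [Matrix.single_mul_single_same, mul_one]
  rw [← hprod]
  exact map_mul_eq_zero_of_sq_eq_zero hker (Matrix.single_mul_single_of_ne _ _ _ _ hki _)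
    (Matrix.single_mul_single_of_ne _ _ _ _ hkj.symm _)
    (Matrix.single_mul_single_of_ne _ _ _ _ hij.symm _)
end

section
/- Let K be an algebraically closed field, n ≥ 1, and let A be an irreducible unital K-subalgebra of K^{n,n}, meaning that the only K-linear subspaces U ⊆ K^n with M·U ⊆ U for all M ∈ A are {0} and K^n. Then A = K^{n,n}. -/
/-! Irreducibility makes `K^n` a simple module over `A`. By Schur's lemma over the algebraically
closed field `K`, every `A`-linear endomorphism of `K^n` is a scalar, so every `K`-linear map
commutes with the commutant of `A`. The Jacobson density theorem, applied to a basis, then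
realises any such map as an element of `A`. -/

open Module

section Burnside

variable {K V : Type*} [Field K] [AddCommGroup V] [Module K V] {B : Subalgebra K (End K V)}

theorem Subalgebra.isSimpleModule_of_forall_invariant [Nontrivial V]
    (hirr : ∀ U : Submodule K V, (∀ f ∈ B, ∀ u ∈ U, f u ∈ U) → U = ⊥ ∨ U = ⊤) :
    IsSimpleModule B V where
  eq_bot_or_eq_top p := by
    have hinv : ∀ f ∈ B, ∀ u ∈ p.restrictScalars K, f u ∈ p.restrictScalars K :=
      fun f hf u hu => p.smul_mem (⟨f, hf⟩ : B) hu
    refine (hirr _ hinv).imp (fun h => ?_) (fun h => ?_) <;>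
      apply Submodule.restrictScalars_injective K <;> simpa using h

theorem Subalgebra.exists_eq_smul_of_isSimpleModule [IsAlgClosed K] [FiniteDimensional K V]
    [IsSimpleModule B V] (g : V →ₗ[B] V) : ∃ c : K, ∀ v, g v = c • v := by
  have : Nontrivial V := IsSimpleModule.nontrivial B V
  obtain ⟨μ, hμ⟩ := End.exists_eigenvalue (g.restrictScalars K)
  obtain ⟨w, hw⟩ := hμ.exists_hasEigenvector
  refine ⟨μ, fun v => sub_eq_zero.mp ?_⟩
  let h : V →ₗ[B] V := g - μ • LinearMap.id
  have hker : h w = 0 := by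
    simpa [h, sub_eq_zero] using hw.apply_eq_smul
  have : h = 0 :=
    (LinearMap.bijective_or_eq_zero _).resolve_left
      fun hbij => hw.2 (hbij.1 (hker.trans (map_zero _).symm))
  simpa [h] using LinearMap.congr_fun this v

theorem Subalgebra.eq_top_of_forall_invariant [IsAlgClosed K] [FiniteDimensional K V]
    (hirr : ∀ U : Submodule K V, (∀ f ∈ B, ∀ u ∈ U, f u ∈ U) → U = ⊥ ∨ U = ⊤) :
    B = ⊤ := by
  classical
  cases subsingleton_or_nontrivial V
  · exact Subsingleton.elim _ _
  have := Subalgebra.isSimpleModule_of_forall_invariant hirr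
  refine eq_top_iff.mpr fun F _ => ?_
  let F' : End (End B V) V :=
    { toFun := F
      map_add' := F.map_add
      map_smul' := fun g v => by
        obtain ⟨c, hc⟩ := Subalgebra.exists_eq_smul_of_isSimpleModule g
        simp [End.smul_def, hc] }
  let b := finBasis K V
  obtain ⟨r, hr⟩ := jacobson_density F' (Finset.univ.image b)
  have : F = r := b.ext fun i => hr _ (Finset.mem_image_of_mem _ (Finset.mem_univ i))
  exact this ▸ r.2

end Burnside

theorem stmt_8_general (K : Type*) [Field K] [IsAlgClosed K] (n : ℕ)
    (A : Subalgebra K (Matrix (Fin n) (Fin n) K))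
    (hirr : ∀ U : Submodule K (Fin n → K),
      (∀ M ∈ A, ∀ u ∈ U, M.mulVec u ∈ U) → U = ⊥ ∨ U = ⊤) :
    A = ⊤ := by
  let e := (Matrix.toLinAlgEquiv' (R := K) (n := Fin n)).toAlgHom
  have hmap : A.map e = ⊤ := Subalgebra.eq_top_of_forall_invariant fun U hU =>
    hirr U fun M hM u hu => by
      simpa [e, Matrix.toLinAlgEquiv'_apply] using hU (e M) ⟨M, hM, rfl⟩ u hu
  apply Subalgebra.map_injective (f := e) Matrix.toLinAlgEquiv'.injective
  rw [hmap, Algebra.map_top, (AlgHom.range_eq_top _).mpr Matrix.toLinAlgEquiv'.surjective]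

theorem stmt_8 (K : Type*) [Field K] [IsAlgClosed K] (n : ℕ) (hn : 1 ≤ n)
    (A : Subalgebra K (Matrix (Fin n) (Fin n) K))
    (hirr : ∀ U : Submodule K (Fin n → K),
      (∀ M ∈ A, ∀ u ∈ U, M.mulVec u ∈ U) → U = ⊥ ∨ U = ⊤) :
    A = ⊤ :=
  stmt_8_general K n A hirr
end

section
/- Let K be an algebraically closed field and n ≥ 2. If A is a proper unital K-subalgebra of K^{n,n} (i.e., A contains the identity matrix, is closed under addition, scalar multiplication and matrix multiplication, and A ≠ K^{n,n}), then dim(A) ≤ n² − n + 1. -/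
/-!
A proper subalgebra `B` of `End K V` cannot make `V` a simple `B`-module: by Schur's lemma its
commutant is `K`, so the Jacobson density theorem would give `B = End K V` (Burnside's theorem).
Hence `B` stabilises a subspace `W` of dimension `k` with `0 < k < n`, and therefore lies in the
kernel of the surjection `f ↦ (W ↪ V → V ↠ V ⧸ W)` onto a space of dimension
`k (n - k) ≥ n - 1`.
-/

open Module

section

variable {K V : Type*} [Field K] [AddCommGroup V] [Module K V]

namespace Submodule

variable (W : Submodule K V)

def offDiagonalBlock : End K V →ₗ[K] W →ₗ[K] V ⧸ W :=
  LinearMap.llcomp K W V (V ⧸ W) W.mkQ ∘ₗ LinearMap.lcomp K V W.subtype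

@[simp]
theorem offDiagonalBlock_apply (f : End K V) (x : W) : W.offDiagonalBlock f x = W.mkQ (f x) := rfl

theorem mem_ker_offDiagonalBlock {f : End K V} :
    f ∈ LinearMap.ker W.offDiagonalBlock ↔ ∀ x ∈ W, f x ∈ W := by
  simp [LinearMap.ext_iff]

theorem offDiagonalBlock_surjective : Function.Surjective W.offDiagonalBlock := by
  intro g
  obtain ⟨s, hs⟩ := W.mkQ.exists_rightInverse_of_surjective W.range_mkQ
  obtain ⟨f, hf⟩ := LinearMap.exists_extend (s ∘ₗ g)
  refine ⟨f, LinearMap.ext fun x ↦ ?_⟩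
  have hfx : f x = s (g x) := congr($hf x)
  rw [offDiagonalBlock_apply, hfx]
  exact congr($hs (g x))

theorem finrank_ker_offDiagonalBlock_add [FiniteDimensional K V] :
    finrank K (LinearMap.ker W.offDiagonalBlock) + finrank K W * finrank K (V ⧸ W) =
      finrank K V * finrank K V := by
  have := LinearMap.finrank_range_add_finrank_ker W.offDiagonalBlock
  rw [LinearMap.range_eq_top.mpr W.offDiagonalBlock_surjective, finrank_top, finrank_linearMap,
    finrank_linearMap] at this
  omega

end Submodule

theorem Subalgebra.eq_top_of_isSimpleModule [IsAlgClosed K] [FiniteDimensional K V]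
    (B : Subalgebra K (End K V)) [IsSimpleModule B V] : B = ⊤ := by
  classical
  refine eq_top_iff.mpr fun φ _ ↦ ?_
  have hφ : ∀ (g : End B V) (v : V), φ (g v) = g (φ v) := by
    intro g v
    obtain ⟨μ, rfl⟩ := (IsSimpleModule.algebraMap_end_bijective_of_isAlgClosed K (A := B)).2 g
    simp
  let f : End (End B V) V := { φ.toAddMonoidHom with map_smul' := hφ }
  let b := Module.finBasis K V
  obtain ⟨r, hr⟩ := jacobson_density f (Finset.univ.image b)
  have : φ = r := b.ext fun i ↦ hr _ (Finset.mem_image_of_mem _ (Finset.mem_univ i))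
  exact this ▸ r.2

theorem Subalgebra.exists_invariant_submodule_of_ne_top [IsAlgClosed K] [FiniteDimensional K V]
    {B : Subalgebra K (End K V)} (hB : B ≠ ⊤) :
    ∃ W : Submodule K V, W ≠ ⊥ ∧ W ≠ ⊤ ∧ ∀ f ∈ B, ∀ x ∈ W, f x ∈ W := by
  have : Nontrivial V := by
    by_contra h
    rw [not_nontrivial_iff_subsingleton] at h
    exact hB (Subsingleton.elim _ _)
  by_contra hW
  have : IsSimpleModule B V :=
    { eq_bot_or_eq_top W := by
        by_contra! hne
        exact hW ⟨W.restrictScalars K, by simpa using hne.1, by simpa using hne.2,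
          fun f hf x hx ↦ W.smul_mem ⟨f, hf⟩ hx⟩ }
  exact hB B.eq_top_of_isSimpleModule

theorem Nat.le_sq_sub_add_one_of_add_mul_le {d k m : ℕ} (hk : 1 ≤ k) (hm : 1 ≤ m)
    (h : d + k * m ≤ (k + m) * (k + m)) : d ≤ (k + m) ^ 2 - (k + m) + 1 := by
  have : k + m ≤ k * m + 1 := by nlinarith
  have := Nat.le_mul_self (k + m)
  rw [sq]
  omega

theorem Subalgebra.finrank_le_of_ne_top [IsAlgClosed K] [FiniteDimensional K V]
    {B : Subalgebra K (End K V)} (hB : B ≠ ⊤) :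
    finrank K B ≤ finrank K V ^ 2 - finrank K V + 1 := by
  obtain ⟨W, hW0, hWtop, hBW⟩ := Subalgebra.exists_invariant_submodule_of_ne_top hB
  have hBle : finrank K B ≤ finrank K (LinearMap.ker W.offDiagonalBlock) :=
    Submodule.finrank_mono (s := Subalgebra.toSubmodule B) fun f hf ↦
      W.mem_ker_offDiagonalBlock.mpr (hBW f (Subalgebra.mem_toSubmodule B |>.mp hf))
  have hsplit := W.finrank_quotient_add_finrank
  have hk : 1 ≤ finrank K W := Nat.one_le_iff_ne_zero.mpr (Submodule.finrank_eq_zero.not.mpr hW0)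
  have hm : 1 ≤ finrank K (V ⧸ W) := by have := Submodule.finrank_lt hWtop; omega
  have hker := W.finrank_ker_offDiagonalBlock_add
  rw [← hsplit, add_comm (finrank K (V ⧸ W))] at hker ⊢
  exact Nat.le_sq_sub_add_one_of_add_mul_le hk hm (by omega)

end

theorem stmt_9_general (K : Type*) [Field K] [IsAlgClosed K] (n : ℕ)
    (A : Subalgebra K (Matrix (Fin n) (Fin n) K))
    (hproper : A ≠ ⊤) :
    Module.finrank K A ≤ n ^ 2 - n + 1 := by
  let e := (Matrix.toLinAlgEquiv' : Matrix (Fin n) (Fin n) K ≃ₐ[K] End K (Fin n → K))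
  have hB : A.map e.toAlgHom ≠ ⊤ := fun h ↦ hproper <| by
    rw [← Subalgebra.comap_map_eq_self_of_injective (f := e.toAlgHom) e.injective A, h,
      Algebra.comap_top]
  simpa [(e.subalgebraMap A).toLinearEquiv.finrank_eq] using Subalgebra.finrank_le_of_ne_top hB

theorem stmt_9 (K : Type*) [Field K] [IsAlgClosed K] (n : ℕ) (hn : 2 ≤ n)
    (A : Subalgebra K (Matrix (Fin n) (Fin n) K))
    (hproper : A ≠ ⊤) :
    Module.finrank K A ≤ n ^ 2 - n + 1 :=
  stmt_9_general K n A hproper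
end
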